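/- (Lemma 1, part (39).) Let M be an N×N real symmetric matrix with eigenvalues λ₁ > λ₂ ≥ ⋯ ≥ λ_N, and let v₁ be a unit eigenvector associated with λ₁. Let x ∈ ℝ^N with ‖x‖₂ = 1 and ⟨x, v₁⟩ ≥ 0. Suppose ‖(x xᵀ − I_N) M x‖₂ ≤ ε and that for some index n ≠ 1 one has |xᵀ M x − λ_n| ≤ ε with λ₁ − λ_n > ε. Then ‖x − v₁‖₂² ≥ 2(1 − ε / (λ₁ − λ_n − ε)). -/
import Mathlib


open Matrix

/-- Lemma 1, part (39): with eigenvalues `λ₁ > λ₂ ≥ ⋯ ≥ λ_N`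
and `v₁` a unit eigenvector for `λ₁`; if `x` is a unit vector with `⟨x, v₁⟩ ≥ 0`,
`‖(x xᵀ − I) M x‖₂ ≤ ε`, and `|xᵀ M x − λ_n| ≤ ε` for some `n ≠ 1` with
`λ₁ − λ_n > ε`, then `‖x − v₁‖₂² ≥ 2(1 − ε / (λ₁ − λ_n − ε))`. -/
theorem stmt_6 {N : ℕ} (hN : 1 < N) (M : Matrix (Fin N) (Fin N) ℝ) (hM : M.IsSymm)
    (lam : Fin N → ℝ) (v : Fin N → Fin N → ℝ)
    (horth : ∀ i j : Fin N, v i ⬝ᵥ v j = if i = j then 1 else 0)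
    (heig : ∀ i : Fin N, M *ᵥ v i = lam i • v i)
    (hmono : ∀ i j : Fin N, i ≤ j → lam j ≤ lam i)
    (hgap : lam ⟨1, hN⟩ < lam ⟨0, by omega⟩)
    (x : Fin N → ℝ) (hx : Real.sqrt (∑ i, x i ^ 2) = 1)
    (hsign : x ⬝ᵥ v ⟨0, by omega⟩ ≥ 0) (ε : ℝ)
    (hgrad : Real.sqrt (∑ i, (((vecMulVec x x - 1) *ᵥ (M *ᵥ x)) i) ^ 2) ≤ ε)
    (n : Fin N) (hn : n ≠ ⟨0, by omega⟩)
    (hray : |x ⬝ᵥ (M *ᵥ x) - lam n| ≤ ε)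
    (hsep : ε < lam ⟨0, by omega⟩ - lam n) :
    ∑ i, (x i - v ⟨0, by omega⟩ i) ^ 2 ≥
      2 * (1 - ε / (lam ⟨0, by omega⟩ - lam n - ε)) := by
  set z : Fin N := ⟨0, by omega⟩
  set v1 : Fin N → ℝ := v z with hv1
  set g : Fin N → ℝ := (vecMulVec x x - 1) *ᵥ (M *ᵥ x) with hg
  set r : ℝ := x ⬝ᵥ (M *ᵥ x) with hr
  set c : ℝ := x ⬝ᵥ v1 with hc
  have hε0 : 0 ≤ ε := le_trans (Real.sqrt_nonneg _) hgrad
  -- norms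
  have hx2 : ∑ i, x i ^ 2 = 1 := by
    have h0 : 0 ≤ ∑ i, x i ^ 2 := Finset.sum_nonneg fun i _ => sq_nonneg _
    nlinarith [Real.sq_sqrt h0, hx]
  have hv2 : ∑ i, v1 i ^ 2 = 1 := by
    have := horth z z
    simpa [dotProduct, sq] using this
  -- g = r • x - M *ᵥ x
  have hgfun : g = fun i => r * x i - (M *ᵥ x) i := by
    funext i
    simp only [hg, sub_mulVec, one_mulVec, Pi.sub_apply, mulVec, vecMulVec, dotProduct,
      of_apply, hr]
    rw [Finset.sum_mul]
    congr 1
    · exact Finset.sum_congr rfl fun j _ => by ring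
  -- (M *ᵥ x) ⬝ᵥ v1 = lam z * c
  have hMx : (M *ᵥ x) ⬝ᵥ v1 = lam z * c := by
    have h1 : (M *ᵥ x) ⬝ᵥ v1 = x ⬝ᵥ (M *ᵥ v1) := by
      rw [dotProduct_comm, dotProduct_mulVec, ← mulVec_transpose, hM.eq, dotProduct_comm]
    rw [h1, heig z, dotProduct_smul, hc, smul_eq_mul]
  -- g ⬝ᵥ v1 = c * (r - lam z)
  have hgd : g ⬝ᵥ v1 = c * (r - lam z) := by
    rw [hgfun]
    simp only [dotProduct, hc]
    rw [show (∑ i, (r * x i - (M *ᵥ x) i) * v1 i)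
        = r * (∑ i, x i * v1 i) - ∑ i, (M *ᵥ x) i * v1 i by
      rw [Finset.mul_sum, ← Finset.sum_sub_distrib]; exact Finset.sum_congr rfl fun i _ => by ring]
    have hS : c = ∑ i, x i * v1 i := rfl
    have hT := hMx
    simp only [dotProduct] at hT
    rw [hT, hS]
    ring
  -- Cauchy–Schwarz: |g ⬝ᵥ v1| ≤ ε
  have hCS : |g ⬝ᵥ v1| ≤ ε := by
    have h1 : (∑ i, g i * v1 i) ^ 2 ≤ (∑ i, g i ^ 2) * (∑ i, v1 i ^ 2) :=
      Finset.sum_mul_sq_le_sq_mul_sq Finset.univ g v1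
    have h2 : ∑ i, g i ^ 2 ≤ ε ^ 2 := by
      have h0 : 0 ≤ ∑ i, g i ^ 2 := Finset.sum_nonneg fun i _ => sq_nonneg _
      nlinarith [Real.sq_sqrt h0, Real.sqrt_nonneg (∑ i, g i ^ 2), hgrad]
    have h3 : (g ⬝ᵥ v1) ^ 2 ≤ ε ^ 2 := by
      simp only [dotProduct]
      calc (∑ i, g i * v1 i) ^ 2 ≤ (∑ i, g i ^ 2) * (∑ i, v1 i ^ 2) := h1
        _ = ∑ i, g i ^ 2 := by rw [hv2, mul_one]
        _ ≤ ε ^ 2 := h2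
    exact abs_le_of_sq_le_sq' h3 hε0 |>.2 |> (fun h => abs_le.mpr ⟨(abs_le_of_sq_le_sq' h3 hε0).1, h⟩)
  -- so |c * (r - lam z)| ≤ ε
  rw [hgd] at hCS
  have habs := abs_le.mp hCS
  have hrn := abs_le.mp hray
  -- lam z - r ≥ lam z - lam n - ε > 0
  have hpos : 0 < lam z - lam n - ε := by linarith
  have hlr : lam z - lam n - ε ≤ lam z - r := by linarith [hrn.1]
  -- c * (lam z - r) ≤ ε
  have hkey : c * (lam z - lam n - ε) ≤ ε := by
    have : c * (lam z - r) ≤ ε := by nlinarith [habs.2]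
    nlinarith [hsign]
  have hcle : c ≤ ε / (lam z - lam n - ε) := (le_div_iff₀ hpos).mpr hkey
  -- expand the norm
  have hexp : ∑ i, (x i - v1 i) ^ 2 = 2 - 2 * c := by
    have : ∑ i, (x i - v1 i) ^ 2 = (∑ i, x i ^ 2) + (∑ i, v1 i ^ 2) - 2 * ∑ i, x i * v1 i := by
      rw [← Finset.sum_add_distrib, Finset.mul_sum, ← Finset.sum_sub_distrib]
      exact Finset.sum_congr rfl fun i _ => by ring
    rw [this, hx2, hv2, hc]
    simp [dotProduct]
    ring
  rw [hexp]
  linarith [hcle]
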